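/- arXiv:1605.00487 — 5 statements merged into one kernel-verified Lean document; each statement's English description precedes it below -/
import Mathlib

section
/- Let L be a field, n ≥ 1, and q ≥ 2 a natural number. Suppose g, s ∈ GL_n(L) satisfy g·s·g⁻¹ = s^q. Then for every root λ (in an algebraic closure of L) of the characteristic polynomial of s there exists an integer m with 1 ≤ m ≤ n such that λ^(q^m − 1) = 1; in particular every eigenvalue of s is a root of unity. -/
/-!
Conjugation preserves the spectrum, so `μ ↦ μ ^ q` maps the spectrum of `s` (over an algebraic
closure) onto itself. The spectrum is finite with at most `n` points, so this map permutes it and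
every eigenvalue `λ` returns to itself after some `m ≤ n` steps: `λ ^ q ^ m = λ`. Since `s` is
invertible, `λ ≠ 0` and we may cancel one factor `λ`.
-/

open Function Polynomial

theorem Set.exists_iterate_eq_self_of_image_eq {α : Type*} {f : α → α} {s : Set α} [Finite s]
    (hf : f '' s = s) {x : α} (hx : x ∈ s) :
    ∃ m, 0 < m ∧ m ≤ s.ncard ∧ f^[m] x = x := by
  have hmaps : MapsTo f s s := fun y hy ↦ hf ▸ mem_image_of_mem f hy
  have hinj : Injective (hmaps.restrict f s s) :=
    Finite.injective_iff_surjective.mpr <| hmaps.restrict_surjective_iff.mpr hf.symm.subset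
  let y : s := ⟨x, hx⟩
  have := Fintype.ofFinite s
  refine ⟨minimalPeriod (hmaps.restrict f s s) y,
    minimalPeriod_pos_of_mem_periodicPts (hinj.mem_periodicPts y), ?_, ?_⟩
  · rw [Set.ncard_eq_toFinset_card', Set.toFinset_card]
    exact minimalPeriod_le_card
  · rw [← hmaps.coe_iterate_restrict y, (isPeriodicPt_minimalPeriod _ y).eq]

theorem Matrix.ncard_spectrum_le {K ι : Type*} [Field K] [Fintype ι] [DecidableEq ι]
    (A : Matrix ι ι K) : (spectrum K A).ncard ≤ Fintype.card ι := by
  classical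
  have hsub : spectrum K A ⊆ (A.charpoly.roots.toFinset : Set K) := fun μ hμ ↦ by
    simpa [A.charpoly_monic.ne_zero] using Matrix.mem_spectrum_iff_isRoot_charpoly.mp hμ
  calc (spectrum K A).ncard ≤ A.charpoly.roots.toFinset.card := by
        simpa using Set.ncard_le_ncard hsub
    _ ≤ A.charpoly.natDegree := (Multiset.toFinset_card_le _).trans (card_roots' _)
    _ = Fintype.card ι := A.charpoly_natDegree_eq_dim

theorem spectrum.image_pow_eq_of_conj_eq_pow {𝕜 A : Type*} [Field 𝕜] [IsAlgClosed 𝕜] [Ring A]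
    [Algebra 𝕜 A] {g s : Aˣ} {q : ℕ} (hq : 0 < q) (h : g * s * g⁻¹ = s ^ q) :
    (· ^ q) '' spectrum 𝕜 (s : A) = spectrum 𝕜 (s : A) := by
  rw [← spectrum.map_pow_of_pos _ hq, ← Units.val_pow_eq_pow_val, ← h]
  simp

theorem pow_pred_eq_one_of_pow_eq_self {M₀ : Type*} [MonoidWithZero M₀] [IsLeftCancelMulZero M₀]
    {x : M₀} {k : ℕ} (hx : x ≠ 0) (hk : 0 < k) (h : x ^ k = x) : x ^ (k - 1) = 1 := by
  refine mul_left_cancel₀ hx ?_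
  rw [← pow_succ', Nat.sub_add_cancel hk, h, mul_one]

theorem statement_0_general (L : Type) [Field L] (n q : ℕ) (hq : 2 ≤ q)
    (g s : GL (Fin n) L)
    (h : g * s * g⁻¹ = s ^ q)
    (lam : AlgebraicClosure L)
    (hroot : Polynomial.aeval lam
      (Matrix.charpoly (s : Matrix (Fin n) (Fin n) L)) = 0) :
    ∃ m : ℕ, 1 ≤ m ∧ m ≤ n ∧ lam ^ (q ^ m - 1) = 1 := by
  let φ := Matrix.GeneralLinearGroup.map (n := Fin n) (algebraMap L (AlgebraicClosure L))
  have hconj : φ g * φ s * (φ g)⁻¹ = φ s ^ q := by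
    simpa only [map_mul, map_inv, map_pow] using congrArg φ h
  have hlam : lam ∈ spectrum _
      ((s : Matrix (Fin n) (Fin n) L).map (algebraMap L (AlgebraicClosure L))) := by
    rwa [Matrix.mem_spectrum_iff_isRoot_charpoly, Matrix.charpoly_map, IsRoot,
      eval_map_algebraMap]
  obtain ⟨m, hm_pos, hm_le, hm⟩ := Set.exists_iterate_eq_self_of_image_eq
    (spectrum.image_pow_eq_of_conj_eq_pow (by omega) hconj) hlam
  have hlam_ne : lam ≠ 0 := fun h0 ↦ spectrum.zero_notMem _ (φ s).isUnit (h0 ▸ hlam)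
  refine ⟨m, hm_pos, hm_le.trans ((Matrix.ncard_spectrum_le _).trans_eq (Fintype.card_fin n)),
    pow_pred_eq_one_of_pow_eq_self hlam_ne (by positivity) ?_⟩
  rwa [pow_iterate] at hm

/-- If `g s g⁻¹ = s^q` in `GL_n(L)`, then every root `λ` (in an algebraic closure of `L`)
of the characteristic polynomial of `s` satisfies `λ^(q^m − 1) = 1` for some `1 ≤ m ≤ n`;
in particular every eigenvalue of `s` is a root of unity. -/
theorem statement_0 (L : Type) [Field L] (n q : ℕ) (hn : 1 ≤ n) (hq : 2 ≤ q)
    (g s : GL (Fin n) L)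
    (h : g * s * g⁻¹ = s ^ q)
    (lam : AlgebraicClosure L)
    (hroot : Polynomial.aeval lam
      (Matrix.charpoly (s : Matrix (Fin n) (Fin n) L)) = 0) :
    ∃ m : ℕ, 1 ≤ m ∧ m ≤ n ∧ lam ^ (q ^ m - 1) = 1 :=
  statement_0_general L n q hq g s h lam hroot
end

section
/- Let L be a field, n ≥ 1, and q ≥ 2 a natural number. Then the set of invertible diagonal n×n matrices D over L for which there exists P ∈ GL_n(L) with P·D·P⁻¹ = D^q is finite. -/
open Polynomial

/-- If a nonzero element's `q`-power orbit stays in a finite set of size at most `n`,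
then it satisfies `x ^ (q ^ n)! = 1`. -/
lemma aux_pow_factorial {L : Type} [Field L] {n q : ℕ} (hq : 2 ≤ q)
    (S : Finset L) (hcard : S.card ≤ n) (hS : ∀ x ∈ S, x ^ q ∈ S)
    {x : L} (hx : x ∈ S) (hx0 : x ≠ 0) : x ^ (q ^ n).factorial = 1 := by
  have horb : ∀ k : ℕ, x ^ q ^ k ∈ S := by
    intro k
    induction k with
    | zero => simpa using hx
    | succ k ih =>
      have := hS _ ih
      rwa [← pow_mul, ← pow_succ] at this
  have key : ∀ a b : ℕ, a < b → b ≤ n → x ^ q ^ a = x ^ q ^ b →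
      x ^ (q ^ n).factorial = 1 := by
    intro a b hab hbn heq
    have hqab : q ^ a < q ^ b := Nat.pow_lt_pow_right (by omega) hab
    set k := q ^ b - q ^ a with hk
    have hk0 : 0 < k := by omega
    have hsplit : x ^ q ^ b = x ^ q ^ a * x ^ k := by
      rw [← pow_add]; congr 1; omega
    have hxk : x ^ k = 1 := by
      have hne : x ^ q ^ a ≠ 0 := pow_ne_zero _ hx0
      have : x ^ q ^ a * x ^ k = x ^ q ^ a * 1 := by
        rw [mul_one, ← hsplit, heq]
      exact mul_left_cancel₀ hne this
    have hkle : k ≤ q ^ n := le_trans (Nat.sub_le _ _) (Nat.pow_le_pow_right (by omega) hbn)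
    obtain ⟨m, hm⟩ := Nat.dvd_factorial hk0 hkle
    rw [hm, pow_mul, hxk, one_pow]
  obtain ⟨a, _, b, _, hab, heq⟩ :=
    Finset.exists_ne_map_eq_of_card_lt_of_maps_to
      (t := S) (s := (Finset.univ : Finset (Fin (S.card + 1))))
      (by simp) (fun (k : Fin (S.card + 1)) _ => horb (k : ℕ))
  rcases hab.lt_or_gt with h | h
  · exact key a b (by exact_mod_cast h) (le_trans (Nat.lt_succ_iff.mp b.isLt) hcard) heq
  · exact key b a (by exact_mod_cast h) (le_trans (Nat.lt_succ_iff.mp a.isLt) hcard) heq.symm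

/-- The set of invertible diagonal `n×n` matrices `D` over a field `L` that are conjugate
(in `GL_n(L)`) to their `q`-th power is finite. -/
theorem statement_1 (L : Type) [Field L] (n q : ℕ) (hn : 1 ≤ n) (hq : 2 ≤ q) :
    {D : Matrix (Fin n) (Fin n) L | D.IsDiag ∧ IsUnit D ∧
      ∃ P : GL (Fin n) L,
        (P : Matrix (Fin n) (Fin n) L) * D * ((P⁻¹ : GL (Fin n) L) : Matrix (Fin n) (Fin n) L)
          = D ^ q}.Finite := by
  classical
  set N := (q ^ n).factorial with hNdef
  -- the finite set of allowed entries
  set T : Set L := {0} ∪ {x : L | x ^ N = 1} with hTdef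
  have hT : T.Finite := by
    refine (Set.finite_singleton 0).union ?_
    have hp : (X ^ N - C 1 : L[X]) ≠ 0 := X_pow_sub_C_ne_zero (Nat.factorial_pos _) 1
    refine (Polynomial.finite_setOf_isRoot hp).subset ?_
    intro x hx
    simp only [Set.mem_setOf_eq] at hx
    simp [Polynomial.IsRoot, hx]
  -- matrices with all entries in T form a finite set
  have hbig : {D : Matrix (Fin n) (Fin n) L | ∀ i j, D i j ∈ T}.Finite := by
    have h1 : (Set.univ.pi fun _ : Fin n =>
        (Set.univ.pi fun _ : Fin n => T) : Set (Fin n → Fin n → L)).Finite :=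
      Set.Finite.pi fun _ => Set.Finite.pi fun _ => hT
    refine (h1.image Matrix.of).subset ?_
    rintro D hD
    exact ⟨fun i j => D i j, fun i _ => fun j _ => hD i j, rfl⟩
  refine hbig.subset ?_
  rintro D ⟨hdiag, hunit, P, hP⟩
  set d : Fin n → L := fun i => D i i with hd
  have hDdiag : Matrix.diagonal d = D := hdiag.diagonal_diag
  -- determinants of shifted matrices agree
  have hdet : ∀ c : L, (D - c • 1).det = (D ^ q - c • 1).det := by
    intro c
    have hconj : D ^ q - c • 1 =
        (P : Matrix (Fin n) (Fin n) L) * (D - c • 1) *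
          ((P⁻¹ : GL (Fin n) L) : Matrix (Fin n) (Fin n) L) := by
      have hsc : (P : Matrix (Fin n) (Fin n) L) * (c • 1) *
          ((P⁻¹ : GL (Fin n) L) : Matrix (Fin n) (Fin n) L) = c • 1 := by
        rw [mul_smul_comm, smul_mul_assoc, mul_one]
        congr 1
        exact P.mul_inv
      rw [mul_sub, sub_mul, hP, hsc]
    rw [hconj, Matrix.det_units_conj]
  -- diagonal entries are nonzero
  have hd0 : ∀ i, d i ≠ 0 := by
    intro i hi
    have hdet0 : D.det ≠ 0 := by
      simpa [Matrix.isUnit_iff_isUnit_det, isUnit_iff_ne_zero] using hunit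
    apply hdet0
    rw [← hDdiag, Matrix.det_diagonal]
    exact Finset.prod_eq_zero (Finset.mem_univ i) hi
  -- the q-th power of each entry is again an entry
  have hmap : ∀ i, ∃ j, d j = d i ^ q := by
    intro i
    have h1 : (D - (d i ^ q) • 1).det = ∏ j, (d j - d i ^ q) := by
      rw [← hDdiag, Matrix.smul_one_eq_diagonal, Matrix.diagonal_sub, Matrix.det_diagonal]
    have h2 : (D ^ q - (d i ^ q) • 1).det = ∏ j, (d j ^ q - d i ^ q) := by
      rw [← hDdiag, Matrix.diagonal_pow, Matrix.smul_one_eq_diagonal, Matrix.diagonal_sub,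
        Matrix.det_diagonal]
      simp [Pi.pow_apply]
    have h3 : (∏ j, (d j - d i ^ q)) = 0 := by
      rw [← h1, hdet, h2]
      exact Finset.prod_eq_zero (Finset.mem_univ i) (by ring)
    obtain ⟨j, _, hj⟩ := Finset.prod_eq_zero_iff.mp h3
    exact ⟨j, sub_eq_zero.mp hj⟩
  -- conclude each diagonal entry is a root of unity
  let S : Finset L := Finset.image d Finset.univ
  have hScard : S.card ≤ n := by
    simpa using Finset.card_image_le (s := (Finset.univ : Finset (Fin n))) (f := d)
  have hSq : ∀ x ∈ S, x ^ q ∈ S := by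
    intro x hx
    obtain ⟨i, _, rfl⟩ := Finset.mem_image.mp (by exact hx)
    obtain ⟨j, hj⟩ := hmap i
    exact Finset.mem_image.mpr ⟨j, Finset.mem_univ j, hj⟩
  intro i j
  by_cases hij : i = j
  · subst hij
    right
    have hxS : d i ∈ S := Finset.mem_image.mpr ⟨i, Finset.mem_univ i, rfl⟩
    exact aux_pow_factorial hq S hScard hSq hxS (hd0 i)
  · left
    exact hdiag hij
end

section
/- Let R be a discrete valuation ring with fraction field L, let n ≥ 1 and q ≥ 1, and let g, s ∈ GL_n(L) satisfy g·s·g⁻¹ = s^q. Suppose that g and s, regarded as elements of the matrix algebra Mₙ(L), are integral over R (for instance, their characteristic polynomials split over L with all roots lying in R). Then there exists h ∈ GL_n(L) such that every entry of h·g·h⁻¹ and every entry of h·s·h⁻¹ lies in (the image of) R. -/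
/-!
The relation `g s = s^q g` rewrites every word in `s` and `g` as a combination of the `s^a g^b`,
so the `R`-algebra generated by `s` and `g` is the product of `R[s]` and `R[g]`, a finitely
generated `R`-module by integrality. It carries the standard lattice `Rⁿ` to a finitely generated
`R`-submodule `Λ ⊆ Lⁿ` that spans `Lⁿ` and is stable under `g` and `s`. Over the PID `R` the
lattice `Λ` is free, an `R`-basis of `Λ` is an `L`-basis of `Lⁿ`, and in that basis `g` and `s`
have entries in `R`.
-/

open Matrix

theorem pow_mul_pow_eq_of_mul_eq_pow_mul {M : Type*} [Monoid M] {g s : M} {q : ℕ}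
    (h : g * s = s ^ q * g) (a b : ℕ) : g ^ b * s ^ a = s ^ (q ^ b * a) * g ^ b := by
  suffices SemiconjBy (g ^ b) (s ^ a) (s ^ (q ^ b * a)) from this
  induction b generalizing a with
  | zero => simp [SemiconjBy]
  | succ b ih =>
    rw [pow_succ, pow_succ, mul_assoc]
    exact (ih (q * a)).mul_left (by simpa [pow_mul] using SemiconjBy.pow_right (x := s) h a)

section Adjoin

variable {R A : Type*} [CommRing R] [Ring A] [Algebra R A]

theorem Algebra.toSubmodule_adjoin_pair_of_mul_eq_pow_mul {g s : A} {q : ℕ}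
    (h : g * s = s ^ q * g) :
    Subalgebra.toSubmodule (Algebra.adjoin R {s, g}) =
      Subalgebra.toSubmodule (Algebra.adjoin R {s}) *
        Subalgebra.toSubmodule (Algebra.adjoin R {g}) := by
  set Ms := Subalgebra.toSubmodule (Algebra.adjoin R {s})
  set Mg := Subalgebra.toSubmodule (Algebra.adjoin R {g})
  have hswap : Mg * Ms ≤ Ms * Mg := by
    simp only [Ms, Mg, Algebra.adjoin_eq_span, ← Submonoid.powers_eq_closure,
      Submodule.span_mul_span]
    refine Submodule.span_mono (Set.mul_subset_iff.mpr ?_)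
    rintro _ ⟨b, rfl⟩ _ ⟨a, rfl⟩
    rw [pow_mul_pow_eq_of_mul_eq_pow_mul h]
    exact Set.mul_mem_mul ⟨_, rfl⟩ ⟨b, rfl⟩
  have hmul : Ms * Mg * (Ms * Mg) ≤ Ms * Mg := calc
    Ms * Mg * (Ms * Mg) = Ms * (Mg * Ms) * Mg := by simp only [mul_assoc]
    _ ≤ Ms * (Ms * Mg) * Mg := by gcongr
    _ = Ms * Mg := by
      rw [← mul_assoc, (Subalgebra.isIdempotentElem_toSubmodule _).eq, mul_assoc,
        (Subalgebra.isIdempotentElem_toSubmodule _).eq]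
  refine le_antisymm ?_ (Submodule.mul_le.mpr fun x hx y hy => Subalgebra.mul_mem _
    (Algebra.adjoin_mono (by simp) hx) (Algebra.adjoin_mono (by simp) hy))
  have h1 : (1 : A) ∈ Ms * Mg := by
    simpa using Submodule.mul_mem_mul (M := Ms) (N := Mg) (Subalgebra.one_mem _)
      (Subalgebra.one_mem _)
  let P : Subalgebra R A :=
    (Ms * Mg).toSubalgebra h1 fun x y hx hy => hmul (Submodule.mul_mem_mul hx hy)
  have hs : s ∈ Ms * Mg := by
    simpa using Submodule.mul_mem_mul (M := Ms) (N := Mg) (Algebra.self_mem_adjoin_singleton R s)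
      (Subalgebra.one_mem _)
  have hg : g ∈ Ms * Mg := by
    simpa using Submodule.mul_mem_mul (M := Ms) (N := Mg) (Subalgebra.one_mem _)
      (Algebra.self_mem_adjoin_singleton R g)
  exact Algebra.adjoin_le (S := P) (Set.pair_subset hs hg)

theorem fg_adjoin_pair_of_mul_eq_pow_mul {g s : A} {q : ℕ} (h : g * s = s ^ q * g)
    (hg : IsIntegral R g) (hs : IsIntegral R s) :
    (Subalgebra.toSubmodule (Algebra.adjoin R {s, g})).FG := by
  rw [Algebra.toSubmodule_adjoin_pair_of_mul_eq_pow_mul h]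
  exact hs.fg_adjoin_singleton.mul hg.fg_adjoin_singleton

end Adjoin

section Lattice

variable {R L : Type*} [CommRing R] [Field L] [Algebra R L]
variable {n : Type*} [Fintype n] [DecidableEq n]

theorem Module.Basis.toMatrix_mul_mul_toMatrix_apply_mem_range [IsDomain R]
    [Module.IsTorsionFree R L] (v : Module.Basis n L (n → L))
    {M : Matrix n n L} (hM : ∀ j, M *ᵥ v j ∈ Submodule.span R (Set.range v)) (i j : n) :
    (v.toMatrix (Pi.basisFun L n) * M * (Pi.basisFun L n).toMatrix v) i j ∈
      (algebraMap R L).range := by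
  have hconj : v.toMatrix (Pi.basisFun L n) * M * (Pi.basisFun L n).toMatrix v =
      LinearMap.toMatrix v v (Matrix.toLin' M) := by
    rw [← basis_toMatrix_mul_linearMap_toMatrix_mul_basis_toMatrix v (Pi.basisFun L n) v
      (Pi.basisFun L n), LinearMap.toMatrix_eq_toMatrix', LinearMap.toMatrix'_toLin']
  rw [hconj, LinearMap.toMatrix_apply]
  exact (v.mem_span_iff_repr_mem R _).mp (hM j) i

variable [IsDomain R] [IsPrincipalIdealRing R] [IsFractionRing R L]

theorem Submodule.IsLattice.exists_conj_mem_range (Λ : Submodule R (n → L)) [Λ.IsLattice L] :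
    ∃ h : GL n L, ∀ M : Matrix n n L, (∀ v ∈ Λ, M *ᵥ v ∈ Λ) → ∀ i j,
      ((h : Matrix n n L) * M * ((h⁻¹ : GL n L) : Matrix n n L)) i j ∈
        (algebraMap R L).range := by
  let b := (Module.Free.chooseBasis R Λ).extendOfIsLattice L
  let v := b.reindex (b.indexEquiv (Pi.basisFun L n))
  have hv : Submodule.span R (Set.range v) = Λ := by
    have hb : ⇑b = Λ.subtype ∘ Module.Free.chooseBasis R Λ := by
      ext1 k; simp [b]
    rw [Module.Basis.range_reindex, hb, Set.range_comp, Submodule.span_image,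
      Module.Basis.span_eq, Submodule.map_subtype_top]
  refine ⟨⟨v.toMatrix (Pi.basisFun L n), (Pi.basisFun L n).toMatrix v,
    Module.Basis.toMatrix_mul_toMatrix_flip _ _, Module.Basis.toMatrix_mul_toMatrix_flip _ _⟩,
    fun M hM => v.toMatrix_mul_mul_toMatrix_apply_mem_range fun j => ?_⟩
  rw [hv]
  exact hM _ (hv ▸ Submodule.subset_span ⟨j, rfl⟩)

theorem Subalgebra.exists_conj_mem_range_of_fg (B : Subalgebra R (Matrix n n L))
    (hB : (Subalgebra.toSubmodule B).FG) :
    ∃ h : GL n L, ∀ M ∈ B, ∀ i j,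
      ((h : Matrix n n L) * M * ((h⁻¹ : GL n L) : Matrix n n L)) i j ∈
        (algebraMap R L).range := by
  let e := Pi.basisFun L n
  let Λ := Submodule.map₂ (Matrix.mulVecBilin R R) (Subalgebra.toSubmodule B)
    (Submodule.span R (Set.range e))
  have he : ∀ i, e i ∈ Λ := fun i => by
    simpa using Submodule.apply_mem_map₂ (Matrix.mulVecBilin R R)
      (p := Subalgebra.toSubmodule B) (Subalgebra.one_mem B)
      (Submodule.subset_span (R := R) (Set.mem_range_self i))
  have hΛ : Λ.IsLattice L := by
    obtain ⟨F, hF⟩ := hB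
    refine ⟨?_, eq_top_iff.mpr ?_⟩
    · dsimp only [Λ]
      rw [← hF, Submodule.map₂_span_span]
      exact Submodule.fg_span (F.finite_toSet.image2 _ (Set.finite_range _))
    · rw [← e.span_eq]
      exact Submodule.span_mono (Set.range_subset_iff.mpr he)
  obtain ⟨h, hh⟩ := Submodule.IsLattice.exists_conj_mem_range Λ
  refine ⟨h, fun M hM => hh M fun v hv => ?_⟩
  have hstab : Λ ≤ Λ.comap ((Matrix.mulVecLin M).restrictScalars R) :=
    Submodule.map₂_le.mpr fun x hx w hw => by
      simpa [Matrix.mulVec_mulVec] using Submodule.apply_mem_map₂ (Matrix.mulVecBilin R R)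
        (p := Subalgebra.toSubmodule B) (Subalgebra.mul_mem B hM hx) hw
  exact hstab hv

end Lattice

theorem statement_3_general (R : Type) [CommRing R] [IsDomain R] [IsDiscreteValuationRing R]
    (L : Type) [Field L] [Algebra R L] [IsFractionRing R L]
    (n q : ℕ)
    (g s : GL (Fin n) L)
    (hrel : g * s * g⁻¹ = s ^ q)
    (hg : IsIntegral R (g : Matrix (Fin n) (Fin n) L))
    (hs : IsIntegral R (s : Matrix (Fin n) (Fin n) L)) :
    ∃ h : GL (Fin n) L,
      (∀ i j : Fin n,
        ((h : Matrix (Fin n) (Fin n) L) * g * ((h⁻¹ : GL (Fin n) L) : Matrix (Fin n) (Fin n) L)) i j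
          ∈ (algebraMap R L).range) ∧
      (∀ i j : Fin n,
        ((h : Matrix (Fin n) (Fin n) L) * s * ((h⁻¹ : GL (Fin n) L) : Matrix (Fin n) (Fin n) L)) i j
          ∈ (algebraMap R L).range) := by
  have hgs : (g : Matrix (Fin n) (Fin n) L) * s = (s : Matrix (Fin n) (Fin n) L) ^ q * g := by
    rw [← Units.val_mul, mul_inv_eq_iff_eq_mul.mp hrel, Units.val_mul, Units.val_pow_eq_pow_val]
  obtain ⟨h, hh⟩ :=
    Subalgebra.exists_conj_mem_range_of_fg _ (fg_adjoin_pair_of_mul_eq_pow_mul hgs hg hs)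
  exact ⟨h, hh _ (Algebra.subset_adjoin (by simp)), hh _ (Algebra.subset_adjoin (by simp))⟩

/-- Let `R` be a DVR with fraction field `L`, and let `g, s ∈ GL_n(L)` satisfy
`g s g⁻¹ = s^q`.  If `g` and `s` are integral over `R` (as elements of the matrix algebra
`Mₙ(L)`), then there exists `h ∈ GL_n(L)` simultaneously conjugating `g` and `s` into
matrices all of whose entries lie in (the image of) `R`. -/
theorem statement_3 (R : Type) [CommRing R] [IsDomain R] [IsDiscreteValuationRing R]
    (L : Type) [Field L] [Algebra R L] [IsFractionRing R L]
    (n q : ℕ) (hn : 1 ≤ n) (hq : 1 ≤ q)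
    (g s : GL (Fin n) L)
    (hrel : g * s * g⁻¹ = s ^ q)
    (hg : IsIntegral R (g : Matrix (Fin n) (Fin n) L))
    (hs : IsIntegral R (s : Matrix (Fin n) (Fin n) L)) :
    ∃ h : GL (Fin n) L,
      (∀ i j : Fin n,
        ((h : Matrix (Fin n) (Fin n) L) * g * ((h⁻¹ : GL (Fin n) L) : Matrix (Fin n) (Fin n) L)) i j
          ∈ (algebraMap R L).range) ∧
      (∀ i j : Fin n,
        ((h : Matrix (Fin n) (Fin n) L) * s * ((h⁻¹ : GL (Fin n) L) : Matrix (Fin n) (Fin n) L)) i j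
          ∈ (algebraMap R L).range) :=
  statement_3_general R L n q g s hrel hg hs
end

section
/- Let ℓ be a prime, k an algebraically closed field of characteristic ℓ, and W = W(k) the ring of ℓ-typical Witt vectors of k. Let A be a commutative W-algebra that is finitely generated as a W-module, reduced, and ℓ-torsion-free (multiplication by ℓ is injective on A). Then every injective W-algebra homomorphism f : A → A is surjective, hence an isomorphism. -/
/-!
Every element of `A` is a root of a monic polynomial over `W(k)`, and a monic polynomial has only
finitely many roots in the reduced Noetherian ring `A`, which embeds into the finite product of
the domains `A ⧸ 𝔭` over its minimal primes `𝔭`. Since `f` maps roots to roots, its iterates take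
finitely many values on a finite generating set, so `f ^ m = f ^ n` for some `m < n`, and
injectivity of `f` gives `f ^ (n - m) = 1`.
-/

open Polynomial

theorem Polynomial.Monic.finite_setOf_isRoot_of_isReduced {A : Type*} [CommRing A] [IsReduced A]
    (hA : (minimalPrimes A).Finite) {p : A[X]} (hp : p.Monic) : {x | p.IsRoot x}.Finite := by
  have : Finite (minimalPrimes A) := hA.to_subtype
  let π := RingHom.pi fun q : minimalPrimes A ↦ Ideal.Quotient.mk q.1
  have hπ : Function.Injective π := by
    rw [RingHom.injective_iff_ker_eq_bot, Ideal.ker_Pi_Quotient_mk, ← sInf_eq_iInf',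
      Ideal.sInf_minimalPrimes, Ideal.radical_bot_of_isReduced]
  have hroots : (Set.univ.pi fun q : minimalPrimes A ↦
      {y | (p.map (Ideal.Quotient.mk q.1)).IsRoot y}).Finite :=
    Set.Finite.pi fun q ↦
      have := q.2.isPrime
      finite_setOfPred_isRoot (hp.map _).ne_zero
  refine (hroots.preimage hπ.injOn).subset fun x hx q _ ↦ ?_
  simp_all [π, IsRoot, eval_map, eval₂_at_apply]

theorem Polynomial.Monic.finite_setOf_aeval_eq_zero {R A : Type*} [CommRing R] [CommRing A]
    [Algebra R A] [IsNoetherianRing A] [IsReduced A] {p : R[X]} (hp : p.Monic) :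
    {x : A | aeval x p = 0}.Finite := by
  simpa [IsRoot, aeval_def, eval_map] using
    (hp.map (algebraMap R A)).finite_setOf_isRoot_of_isReduced
      (minimalPrimes.finite_of_isNoetherianRing A)

theorem AlgHom.exists_lt_pow_eq_pow {R A : Type*} [CommRing R] [CommRing A] [Algebra R A]
    [Module.Finite R A] [IsNoetherianRing A] [IsReduced A] (f : A →ₐ[R] A) :
    ∃ m n, m < n ∧ f ^ m = f ^ n := by
  obtain ⟨s, hs⟩ := Module.Finite.fg_top (R := R) (M := A)
  choose P hPmonic hProot using fun x : A ↦ Algebra.IsIntegral.isIntegral (R := R) x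
  have (x : A) : _root_.Finite {y : A // aeval y (P x) = 0} :=
    (hPmonic x).finite_setOf_aeval_eq_zero.to_subtype
  have hroot (n : ℕ) (x : A) : aeval ((f ^ n) x) (P x) = 0 := by
    rw [aeval_algHom_apply, aeval_def, hProot, map_zero]
  obtain ⟨m, n, hne, hmn⟩ := Finite.exists_ne_map_eq_of_infinite
    fun n (x : s) ↦ (⟨(f ^ n) x, hroot n x⟩ : {y : A // aeval y (P x) = 0})
  have hpow : f ^ m = f ^ n := AlgHom.toLinearMap_injective <| LinearMap.ext_on hs
    fun x hx ↦ congr_arg Subtype.val (congr_fun hmn ⟨x, hx⟩)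
  rcases hne.lt_or_gt with h | h
  exacts [⟨m, n, h, hpow⟩, ⟨n, m, h, hpow.symm⟩]

theorem AlgHom.isOfFinOrder_of_injective {R A : Type*} [CommRing R] [CommRing A] [Algebra R A]
    [Module.Finite R A] [IsNoetherianRing A] [IsReduced A] {f : A →ₐ[R] A}
    (hf : Function.Injective f) : IsOfFinOrder f := by
  obtain ⟨m, n, hmn, hpow⟩ := f.exists_lt_pow_eq_pow
  refine isOfFinOrder_iff_pow_eq_one.2 ⟨n - m, Nat.sub_pos_of_lt hmn, ?_⟩
  have hinj : Function.Injective (f ^ m) := by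
    rw [coe_pow]
    exact hf.iterate m
  ext x
  have hx := DFunLike.congr_fun hpow x
  rw [← Nat.add_sub_cancel' hmn.le, pow_add, mul_apply] at hx
  exact hinj hx.symm

theorem statement_4_general (l : ℕ) [Fact l.Prime]
    (k : Type) [Field k] [IsAlgClosed k] [CharP k l]
    (A : Type) [CommRing A] [Algebra (WittVector l k) A]
    [Module.Finite (WittVector l k) A] [IsReduced A]
    (f : A →ₐ[WittVector l k] A) (hf : Function.Injective f) :
    Function.Surjective f := by
  -- `W(k)` is Noetherian, being a discrete valuation ring because `k` is perfect.
  have : IsNoetherianRing A := .of_finite (WittVector l k) A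
  obtain ⟨g, hg⟩ := (AlgHom.isOfFinOrder_of_injective hf).isUnit.exists_right_inv
  exact fun a ↦ ⟨g a, DFunLike.congr_fun hg a⟩

/-- Let `k` be an algebraically closed field of prime characteristic `ℓ` and
`W = W(k)` its ring of `ℓ`-typical Witt vectors.  If `A` is a commutative `W`-algebra that
is finitely generated as a `W`-module, reduced, and `ℓ`-torsion-free, then every injective
`W`-algebra endomorphism of `A` is surjective (hence an isomorphism). -/
theorem statement_4 (l : ℕ) [Fact l.Prime]
    (k : Type) [Field k] [IsAlgClosed k] [CharP k l]
    (A : Type) [CommRing A] [Algebra (WittVector l k) A]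
    [Module.Finite (WittVector l k) A] [IsReduced A]
    (htf : Function.Injective (fun a : A => (l : A) * a))
    (f : A →ₐ[WittVector l k] A) (hf : Function.Injective f) :
    Function.Surjective f :=
  statement_4_general l k A f hf
end

section
/- Let Ω be an algebraically closed field of characteristic 0 equipped with a W-algebra structure, and let ψ₁, ψ₂ : S ⊗_W Ω → Ω be Ω-algebra homomorphisms whose kernels lie in the same connected component of PrimeSpectrum(S ⊗_W Ω). Then the characteristic polynomials of the matrices ψ₁(σ) and ψ₂(σ) (the images under ψ₁ and ψ₂ of the universal matrix σ) are equal. -/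
set_option linter.unusedSectionVars false
open MvPolynomial Matrix

noncomputable section

/-- Index type for the `2n²` variables: left summand for the entries of `Fr`,
right summand for the entries of `σ`. -/
abbrev MatVar (n : ℕ) : Type := (Fin n × Fin n) ⊕ (Fin n × Fin n)

variable (W : Type) [CommRing W] (n q : ℕ)

/-- The universal matrix `Fr` of indeterminates. -/
def frPoly : Matrix (Fin n) (Fin n) (MvPolynomial (MatVar n) W) :=
  Matrix.of fun i j => X (Sum.inl (i, j))

/-- The universal matrix `σ` of indeterminates. -/
def sigPoly : Matrix (Fin n) (Fin n) (MvPolynomial (MatVar n) W) :=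
  Matrix.of fun i j => X (Sum.inr (i, j))

/-- The element `det Fr · det σ` at which we localize. -/
def detElt : MvPolynomial (MatVar n) W := (frPoly W n).det * (sigPoly W n).det

/-- The localization of the polynomial ring at `det Fr · det σ`. -/
abbrev LocS : Type := Localization.Away (detElt W n)

/-- The matrix `Fr` over the localization. -/
def frLoc : Matrix (Fin n) (Fin n) (LocS W n) :=
  (frPoly W n).map (algebraMap (MvPolynomial (MatVar n) W) (LocS W n))

/-- The matrix `σ` over the localization. -/
def sigLoc : Matrix (Fin n) (Fin n) (LocS W n) :=
  (sigPoly W n).map (algebraMap (MvPolynomial (MatVar n) W) (LocS W n))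

/-- The ideal generated by the `n²` entries of `Fr·σ − σ^q·Fr`. -/
def relIdeal : Ideal (LocS W n) :=
  Ideal.span {x | ∃ i j, x = (frLoc W n * sigLoc W n - sigLoc W n ^ q * frLoc W n) i j}

/-- The ring `S = S_{q,n}`: the polynomial ring over `W` in the `2n²` matrix entries,
localized at `det Fr · det σ`, modulo the `n²` entries of `Fr·σ − σ^q·Fr`. -/
def Sring : Type := LocS W n ⧸ relIdeal W n q

instance : CommRing (Sring W n q) := Ideal.Quotient.commRing _

instance : Algebra W (Sring W n q) := Ideal.Quotient.algebra _

/-- The universal matrix `Fr` over `S`. -/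
def frS : Matrix (Fin n) (Fin n) (Sring W n q) :=
  (frLoc W n).map (Ideal.Quotient.mk (relIdeal W n q))

/-- The universal matrix `σ` over `S`. -/
def sigS : Matrix (Fin n) (Fin n) (Sring W n q) :=
  (sigLoc W n).map (Ideal.Quotient.mk (relIdeal W n q))

/-! The distinguished point `x₀`, its connected component `X⁰`, and the ideal `I`. -/

variable (l : ℕ) [Fact l.Prime] (k : Type) [Field k] [IsAlgClosed k] [CharP k l]

/-- The Witt vectors `W(k)`. -/
abbrev Wk : Type := WittVector l k

/-- The canonical residue homomorphism `W(k) → k`, `w ↦ w₀`. -/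
def resHom : Wk l k →+* k := WittVector.ghostComponent 0

/-- `k` as a `W(k)`-algebra via the residue map. -/
instance : Algebra (Wk l k) k := (resHom l k).toAlgebra

/-- The point with both matrices equal to the identity. -/
def diagVal : MatVar n → k := fun v =>
  Sum.elim (fun ij => if ij.1 = ij.2 then (1 : k) else 0)
    (fun ij => if ij.1 = ij.2 then (1 : k) else 0) v

/-- Evaluation of polynomials at the identity point. -/
def evalPoly : MvPolynomial (MatVar n) (Wk l k) →ₐ[Wk l k] k := aeval (diagVal n k)

lemma frPoly_eval : (frPoly (Wk l k) n).map (evalPoly n l k) = 1 := by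
  ext i j
  simp [frPoly, evalPoly, diagVal, Matrix.one_apply, Matrix.map_apply]

lemma sigPoly_eval : (sigPoly (Wk l k) n).map (evalPoly n l k) = 1 := by
  ext i j
  simp [sigPoly, evalPoly, diagVal, Matrix.one_apply, Matrix.map_apply]

lemma isUnit_eval_detElt : IsUnit (evalPoly n l k (detElt (Wk l k) n)) := by
  have h1 : (evalPoly n l k) ((frPoly (Wk l k) n).det) = 1 := by
    rw [AlgHom.map_det, AlgHom.mapMatrix_apply, frPoly_eval, Matrix.det_one]
  have h2 : (evalPoly n l k) ((sigPoly (Wk l k) n).det) = 1 := by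
    rw [AlgHom.map_det, AlgHom.mapMatrix_apply, sigPoly_eval, Matrix.det_one]
  rw [detElt, _root_.map_mul, h1, h2, mul_one]
  exact isUnit_one

/-- Evaluation at the identity point, extended to the localization. -/
def evalLoc : LocS (Wk l k) n →+* k :=
  Localization.awayLift (evalPoly n l k).toRingHom (detElt (Wk l k) n) (isUnit_eval_detElt n l k)

lemma evalLoc_algebraMap (x : MvPolynomial (MatVar n) (Wk l k)) :
    evalLoc n l k (algebraMap (MvPolynomial (MatVar n) (Wk l k)) (LocS (Wk l k) n) x) =
      evalPoly n l k x := by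
  simp [evalLoc, Localization.awayLift, IsLocalization.Away.lift_eq]

lemma relIdeal_le_ker : relIdeal (Wk l k) n q ≤ RingHom.ker (evalLoc n l k) := by
  rw [relIdeal, Ideal.span_le]
  rintro x ⟨i, j, rfl⟩
  simp only [SetLike.mem_coe, RingHom.mem_ker]
  have hfr : (frLoc (Wk l k) n).map (evalLoc n l k) = 1 := by
    rw [frLoc, Matrix.map_map]
    have hcomp : (evalLoc n l k) ∘
        (algebraMap (MvPolynomial (MatVar n) (Wk l k)) (LocS (Wk l k) n))
        = evalPoly n l k := by
      funext x; exact evalLoc_algebraMap n l k x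
    rw [hcomp]
    exact frPoly_eval n l k
  have hsig : (sigLoc (Wk l k) n).map (evalLoc n l k) = 1 := by
    rw [sigLoc, Matrix.map_map]
    have hcomp : (evalLoc n l k) ∘
        (algebraMap (MvPolynomial (MatVar n) (Wk l k)) (LocS (Wk l k) n))
        = evalPoly n l k := by
      funext x; exact evalLoc_algebraMap n l k x
    rw [hcomp]
    exact sigPoly_eval n l k
  have key : (frLoc (Wk l k) n * sigLoc (Wk l k) n
      - sigLoc (Wk l k) n ^ q * frLoc (Wk l k) n).map (evalLoc n l k) = 0 := by
    have h0 : (RingHom.mapMatrix (evalLoc n l k) (m := Fin n))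
        (frLoc (Wk l k) n * sigLoc (Wk l k) n
          - sigLoc (Wk l k) n ^ q * frLoc (Wk l k) n) = 0 := by
      rw [map_sub, _root_.map_mul, _root_.map_mul, map_pow]
      simp only [RingHom.mapMatrix_apply]
      rw [hfr, hsig]
      simp
    simpa only [RingHom.mapMatrix_apply] using h0
  calc (evalLoc n l k) ((frLoc (Wk l k) n * sigLoc (Wk l k) n
      - sigLoc (Wk l k) n ^ q * frLoc (Wk l k) n) i j)
      = ((frLoc (Wk l k) n * sigLoc (Wk l k) n
      - sigLoc (Wk l k) n ^ q * frLoc (Wk l k) n).map (evalLoc n l k)) i j := rfl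
    _ = 0 := by rw [key]; rfl

/-- Evaluation at the identity point, as a homomorphism `S → k`. -/
def evalS : Sring (Wk l k) n q →+* k :=
  Ideal.Quotient.lift (relIdeal (Wk l k) n q) (evalLoc n l k)
    (fun _ ha => RingHom.mem_ker.mp (relIdeal_le_ker n q l k ha))

/-- The point `x₀` of `Spec S`: the kernel of the evaluation sending `Fr` and `σ`
to the identity matrix. -/
def x0 : PrimeSpectrum (Sring (Wk l k) n q) :=
  ⟨RingHom.ker (evalS n q l k), RingHom.ker_isPrime _⟩

/-- The connected component `X⁰` of `x₀` in `Spec S`. -/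
def Xcomp : Set (PrimeSpectrum (Sring (Wk l k) n q)) := connectedComponent (x0 n q l k)

/-- The ideal `I`: the intersection of all primes belonging to `X⁰`. -/
def Iideal : Ideal (Sring (Wk l k) n q) :=
  ⨅ (P : PrimeSpectrum (Sring (Wk l k) n q)) (_ : P ∈ Xcomp n q l k), P.asIdeal


open scoped TensorProduct

/-!
The relation `Fr · σ · Fr⁻¹ = σ^q` makes `x ↦ x^q` permute the eigenvalues of `σ` at every
point of `Spec (S ⊗_W Ω)`; a permutation of at most `n` elements has order dividing `n!`, so all
eigenvalues satisfy `x^N = x` with `N = q^{n!}`. Hence each coefficient `c` of the characteristic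
polynomial of the universal `σ` takes, at every prime, one of finitely many values `t ∈ Ω`, i.e.
`Spec` is covered by the finitely many pairwise disjoint closed sets `V(c - t)`. These are then
clopen, so `c - t` vanishes either on a whole connected component or nowhere on it.
-/

open scoped Nat

lemma Finset.iterate_factorial_eq_of_image_eq {α : Type*} [DecidableEq α] {f : α → α}
    {s : Finset α} (h : s.image f = s) {m : ℕ} (hm : s.card ≤ m) {x : α} (hx : x ∈ s) :
    f^[m !] x = x := by
  have hmaps : Set.MapsTo f s s := fun y hy => h ▸ Finset.mem_image_of_mem f hy
  have hsurj : Function.Surjective (hmaps.restrict f s s) := by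
    rintro ⟨y, hy⟩
    obtain ⟨z, hz, rfl⟩ := Finset.mem_image.mp (h.symm ▸ hy : y ∈ s.image f)
    exact ⟨⟨z, hz⟩, rfl⟩
  have hperiod := Function.injective_iff_iterate_factorial_card_eq_id.mp
    (Finite.injective_iff_surjective.mpr hsurj)
  obtain ⟨k, hk⟩ : (Fintype.card (s : Set α))! ∣ m ! :=
    Nat.factorial_dvd_factorial (by simpa using hm)
  have hid : (hmaps.restrict f s s)^[m !] = id := by
    rw [hk, Function.iterate_mul, hperiod, Function.iterate_id]
  simpa [hmaps.iterate_restrict] using congrArg Subtype.val (congrFun hid ⟨x, hx⟩)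

namespace Polynomial

open Classical in
def powFixedPoints (𝕜 : Type*) [Field 𝕜] (N : ℕ) : Finset 𝕜 :=
  (X ^ N - X : 𝕜[X]).roots.toFinset

lemma mem_powFixedPoints {𝕜 : Type*} [Field 𝕜] {N : ℕ} (hN : 1 < N) {z : 𝕜} :
    z ∈ powFixedPoints 𝕜 N ↔ z ^ N = z := by
  simp [powFixedPoints, FiniteField.X_pow_card_sub_X_ne_zero 𝕜 hN, sub_eq_zero]

open Classical in
def splitMonicPolys {𝕜 : Type*} [Field 𝕜] (s : Finset 𝕜) (d : ℕ) : Finset 𝕜[X] :=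
  (s.sym d).image fun m : Sym 𝕜 d => ((m : Multiset 𝕜).map fun z => X - C z).prod

lemma prod_X_sub_C_mem_splitMonicPolys {𝕜 : Type*} [Field 𝕜] {s : Finset 𝕜} {m : Multiset 𝕜}
    (hm : ∀ z ∈ m, z ∈ s) :
    (m.map fun z => X - C z).prod ∈ splitMonicPolys s (Multiset.card m) := by
  classical
  exact Finset.mem_image.mpr ⟨Sym.mk m rfl, Finset.mem_sym_iff.mpr hm, rfl⟩

end Polynomial

namespace Matrix

variable {ι : Type*} [Fintype ι] [DecidableEq ι] {q : ℕ}

/-- Since `M ^ q` is conjugate to `M`, raising to the `q`-th power permutes the eigenvalues. -/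
lemma pow_pow_factorial_eq_of_isRoot_charpoly {K : Type*} [Field K] [IsAlgClosed K]
    {C M : Matrix ι ι K} (hq : 0 < q) (hC : IsUnit C.det)
    (hrel : C * M = M ^ q * C) {a : K} (ha : M.charpoly.IsRoot a) :
    a ^ q ^ (Fintype.card ι)! = a := by
  classical
  set s := M.charpoly.roots.toFinset
  have hs : (s : Set K) = spectrum K M := by
    ext x
    simp [s, mem_spectrum_iff_isRoot_charpoly, M.charpoly_monic.ne_zero]
  have hspec : spectrum K (M ^ q) = spectrum K M := by
    obtain ⟨u, rfl⟩ := (isUnit_iff_isUnit_det C).mpr hC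
    have : M ^ q = u * M * u⁻¹ := by rw [hrel, mul_assoc, Units.mul_inv, mul_one]
    rw [this, spectrum.units_conjugate]
  have himage : s.image (· ^ q) = s := by
    apply Finset.coe_injective
    rw [Finset.coe_image, hs, ← spectrum.map_pow_of_pos M hq, hspec]
  have hcard : s.card ≤ Fintype.card ι :=
    (Multiset.toFinset_card_le _).trans
      ((Polynomial.card_roots' _).trans (charpoly_natDegree_eq_dim M).le)
  have hmem : a ∈ s := by simpa [s, M.charpoly_monic.ne_zero] using ha
  simpa [pow_iterate] using Finset.iterate_factorial_eq_of_image_eq himage hcard hmem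

lemma exists_charpoly_eq_map_of_mul_eq_pow_mul {𝕜 K : Type*} [Field 𝕜] [IsAlgClosed 𝕜] [Field K]
    [IsAlgClosed K] (e : 𝕜 →+* K) (hq : 2 ≤ q) {C M : Matrix ι ι K} (hC : IsUnit C.det)
    (hrel : C * M = M ^ q * C) :
    ∃ f ∈ Polynomial.splitMonicPolys (Polynomial.powFixedPoints 𝕜 (q ^ (Fintype.card ι)!))
      (Fintype.card ι), M.charpoly = f.map e := by
  set N := q ^ (Fintype.card ι)!
  have hN : 1 < N := hq.trans (Nat.le_self_pow (Nat.factorial_ne_zero _) q)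
  set R := M.charpoly.roots
  have hperiodic : ∀ r ∈ R, r ^ N = r := fun r hr =>
    pow_pow_factorial_eq_of_isRoot_charpoly (by omega) hC hrel
      (Polynomial.isRoot_of_mem_roots hr)
  have hrange : ∀ r ∈ R, r ∈ e.range := fun r hr =>
    (IsAlgClosed.splits _).mem_range_of_isRoot (FiniteField.X_pow_card_sub_X_ne_zero 𝕜 hN)
      (by simp [hperiodic r hr])
  set s := R.map (Function.invFun e)
  have hs : s.map e = R := by
    rw [Multiset.map_map]
    exact (Multiset.map_congr rfl fun r hr => Function.invFun_eq (hrange r hr)).trans R.map_id'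
  have hfixed : ∀ z ∈ s, z ∈ Polynomial.powFixedPoints 𝕜 N := by
    intro z hz
    rw [Polynomial.mem_powFixedPoints hN]
    apply e.injective
    obtain ⟨r, hr, rfl⟩ := Multiset.mem_map.mp hz
    rw [map_pow, Function.invFun_eq (hrange r hr), hperiodic r hr]
  clear_value s
  have hcard : Multiset.card s = Fintype.card ι := by
    rw [← Multiset.card_map e, hs, ← (IsAlgClosed.splits _).natDegree_eq_card_roots,
      charpoly_natDegree_eq_dim]
  refine ⟨_, hcard ▸ Polynomial.prod_X_sub_C_mem_splitMonicPolys hfixed, ?_⟩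
  rw [(IsAlgClosed.splits _).eq_prod_roots_of_monic M.charpoly_monic,
    show M.charpoly.roots = s.map e from hs.symm, Polynomial.map_multiset_prod, Multiset.map_map,
    Multiset.map_map]
  simp

/-- A prime `P` is the kernel of `A → K` for `K` an algebraic closure of the residue field at `P`;
the roots of the characteristic polynomial over `K` then come from `𝕜`. -/
lemma exists_charpoly_coeff_sub_algebraMap_mem {𝕜 A : Type*} [Field 𝕜] [IsAlgClosed 𝕜]
    [CommRing A] [Algebra 𝕜 A] (hq : 2 ≤ q) {C M : Matrix ι ι A} (hC : IsUnit C.det)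
    (hrel : C * M = M ^ q * C) (P : PrimeSpectrum A) :
    ∃ f ∈ Polynomial.splitMonicPolys (Polynomial.powFixedPoints 𝕜 (q ^ (Fintype.card ι)!))
      (Fintype.card ι), ∀ i, M.charpoly.coeff i - algebraMap 𝕜 A (f.coeff i) ∈ P.asIdeal := by
  let ρ : A →+* AlgebraicClosure P.asIdeal.ResidueField :=
    (algebraMap _ _).comp (algebraMap A P.asIdeal.ResidueField)
  have hker : RingHom.ker ρ = P.asIdeal := by
    rw [RingHom.ker_comp_of_injective _ (algebraMap P.asIdeal.ResidueField
      (AlgebraicClosure P.asIdeal.ResidueField)).injective,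
      Ideal.ker_algebraMap_residueField]
  have hrelρ : C.map ρ * M.map ρ = M.map ρ ^ q * C.map ρ := by
    simpa only [map_mul, map_pow, RingHom.mapMatrix_apply] using congrArg ρ.mapMatrix hrel
  obtain ⟨f, hf, hchar⟩ := exists_charpoly_eq_map_of_mul_eq_pow_mul
    (ρ.comp (algebraMap 𝕜 A)) hq
    (by simpa only [RingHom.map_det, RingHom.mapMatrix_apply] using hC.map ρ) hrelρ
  refine ⟨f, hf, fun i => ?_⟩
  rw [← hker, RingHom.mem_ker, map_sub, sub_eq_zero, ← Polynomial.coeff_map, ← charpoly_map,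
    hchar, Polynomial.coeff_map, RingHom.comp_apply]

end Matrix

lemma Ideal.eq_of_sub_algebraMap_mem {𝕜 A : Type*} [Field 𝕜] [CommRing A] [Algebra 𝕜 A]
    {I : Ideal A} (hI : I ≠ ⊤) {a : A} {t t' : 𝕜} (ht : a - algebraMap 𝕜 A t ∈ I)
    (ht' : a - algebraMap 𝕜 A t' ∈ I) : t = t' := by
  by_contra hne
  have hunit : IsUnit (algebraMap 𝕜 A (t' - t)) :=
    (sub_ne_zero.mpr (Ne.symm hne)).isUnit.map _
  refine hI (I.eq_top_of_isUnit_mem ?_ hunit)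
  simpa [map_sub] using I.sub_mem ht ht'

/-- The closed sets `V(a - t)`, `t ∈ T`, are finitely many, pairwise disjoint and cover
`Spec A`, so each of them is clopen. -/
lemma PrimeSpectrum.sub_algebraMap_mem_of_mem_connectedComponent {𝕜 A : Type*} [Field 𝕜]
    [CommRing A] [Algebra 𝕜 A] {a : A} {T : Set 𝕜} (hT : T.Finite)
    (hcover : ∀ P : PrimeSpectrum A, ∃ t ∈ T, a - algebraMap 𝕜 A t ∈ P.asIdeal)
    {x y : PrimeSpectrum A} (hy : y ∈ connectedComponent x) {t : 𝕜}
    (hx : a - algebraMap 𝕜 A t ∈ x.asIdeal) : a - algebraMap 𝕜 A t ∈ y.asIdeal := by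
  let V : 𝕜 → Set (PrimeSpectrum A) := fun t => zeroLocus {a - algebraMap 𝕜 A t}
  have hV : ∀ P t, P ∈ V t ↔ a - algebraMap 𝕜 A t ∈ P.asIdeal := fun P t => by
    simp [V, mem_zeroLocus]
  have hcompl : (V t)ᶜ = ⋃ t' ∈ T \ {t}, V t' := by
    ext P
    simp only [Set.mem_compl_iff, Set.mem_iUnion, Set.mem_sdiff, Set.mem_singleton_iff, hV,
      exists_prop]
    constructor
    · intro hP
      obtain ⟨t', ht', hP'⟩ := hcover P
      exact ⟨t', ⟨ht', fun h => hP (h ▸ hP')⟩, hP'⟩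
    · rintro ⟨t', ⟨-, hne⟩, hP'⟩ hP
      exact hne (Ideal.eq_of_sub_algebraMap_mem P.isPrime.ne_top hP' hP)
  have hclopen : IsClopen (V t) :=
    ⟨isClosed_zeroLocus _, isClosed_compl_iff.mp
      (hcompl ▸ (hT.sdiff).isClosed_biUnion fun _ _ => isClosed_zeroLocus _)⟩
  exact (hV y t).mp (hclopen.connectedComponent_subset ((hV x t).mpr hx) hy)

lemma AlgHom.sub_algebraMap_mem_ker_iff {𝕜 A : Type*} [CommRing 𝕜] [CommRing A] [Algebra 𝕜 A]
    (ψ : A →ₐ[𝕜] 𝕜) (a : A) (t : 𝕜) :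
    a - algebraMap 𝕜 A t ∈ RingHom.ker ψ.toRingHom ↔ ψ a = t := by
  rw [RingHom.mem_ker, AlgHom.toRingHom_eq_coe, RingHom.coe_coe, map_sub, AlgHom.commutes,
    Algebra.algebraMap_self, RingHom.id_apply, sub_eq_zero]

lemma frS_mul_sigS : frS W n q * sigS W n q = sigS W n q ^ q * frS W n q := by
  rw [← sub_eq_zero]
  ext i j
  have hmap : frS W n q * sigS W n q - sigS W n q ^ q * frS W n q =
      (Ideal.Quotient.mk (relIdeal W n q)).mapMatrix
        (frLoc W n * sigLoc W n - sigLoc W n ^ q * frLoc W n) := by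
    simp only [map_sub, map_mul, map_pow]
    rfl
  rw [hmap]
  exact Ideal.Quotient.eq_zero_iff_mem.mpr (Ideal.subset_span ⟨i, j, rfl⟩)

lemma isUnit_det_frS : IsUnit (frS W n q).det := by
  have hdet : IsUnit (algebraMap _ (LocS W n) (detElt W n)) :=
    IsLocalization.Away.algebraMap_isUnit _
  simp only [detElt, map_mul, RingHom.map_det] at hdet
  show IsUnit ((Ideal.Quotient.mk _).mapMatrix (frLoc W n)).det
  rw [← RingHom.map_det]
  exact (isUnit_of_mul_isUnit_left hdet).map _

theorem statement_12 (hq2 : 2 ≤ q)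
    (Ω : Type) [Field Ω] [IsAlgClosed Ω] [Algebra (Wk l k) Ω]
    (ψ₁ ψ₂ : (Ω ⊗[Wk l k] Sring (Wk l k) n q) →ₐ[Ω] Ω)
    (hcc : (⟨RingHom.ker ψ₁.toRingHom, RingHom.ker_isPrime _⟩ :
        PrimeSpectrum (Ω ⊗[Wk l k] Sring (Wk l k) n q)) ∈
      connectedComponent (⟨RingHom.ker ψ₂.toRingHom, RingHom.ker_isPrime _⟩ :
        PrimeSpectrum (Ω ⊗[Wk l k] Sring (Wk l k) n q))) :
    ((sigS (Wk l k) n q).map fun s => ψ₁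
        ((Algebra.TensorProduct.includeRight :
          Sring (Wk l k) n q →ₐ[Wk l k] Ω ⊗[Wk l k] Sring (Wk l k) n q) s)).charpoly =
    ((sigS (Wk l k) n q).map fun s => ψ₂
        ((Algebra.TensorProduct.includeRight :
          Sring (Wk l k) n q →ₐ[Wk l k] Ω ⊗[Wk l k] Sring (Wk l k) n q) s)).charpoly := by
  set ι : Sring (Wk l k) n q →ₐ[Wk l k] Ω ⊗[Wk l k] Sring (Wk l k) n q :=
    Algebra.TensorProduct.includeRight
  have hrel : (frS (Wk l k) n q).map ι * (sigS (Wk l k) n q).map ι =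
      (sigS (Wk l k) n q).map ι ^ q * (frS (Wk l k) n q).map ι := by
    simpa only [map_mul, map_pow, AlgHom.mapMatrix_apply]
      using congrArg ι.mapMatrix (frS_mul_sigS (Wk l k) n q)
  have hdet : IsUnit ((frS (Wk l k) n q).map ι).det := by
    simpa only [AlgHom.map_det, AlgHom.mapMatrix_apply] using (isUnit_det_frS _ n q).map ι
  have hcharpoly : ∀ ψ : (Ω ⊗[Wk l k] Sring (Wk l k) n q) →ₐ[Ω] Ω,
      ((sigS (Wk l k) n q).map fun s => ψ (ι s)).charpoly =
        ((sigS (Wk l k) n q).map ι).charpoly.map ψ.toRingHom := fun ψ => by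
    rw [← Matrix.charpoly_map, Matrix.map_map]
    rfl
  ext i
  rw [hcharpoly, hcharpoly, Polynomial.coeff_map, Polynomial.coeff_map]
  have hprime := Matrix.exists_charpoly_coeff_sub_algebraMap_mem (𝕜 := Ω) hq2 hdet hrel
  obtain ⟨f, -, hf⟩ := hprime ⟨RingHom.ker ψ₂.toRingHom, RingHom.ker_isPrime _⟩
  have hf₁ := PrimeSpectrum.sub_algebraMap_mem_of_mem_connectedComponent
    ((Finset.finite_toSet _).image fun f : Polynomial Ω => f.coeff i)
    (fun P => by
      obtain ⟨f, hfT, hf⟩ := hprime P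
      exact ⟨f.coeff i, ⟨f, hfT, rfl⟩, hf i⟩) hcc (hf i)
  exact ((ψ₁.sub_algebraMap_mem_ker_iff _ _).mp hf₁).trans
    ((ψ₂.sub_algebraMap_mem_ker_iff _ _).mp (hf i)).symm
end
end
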